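/- arXiv:math/0401375 — 2 statements merged into one kernel-verified Lean document; each statement's English description precedes it below -/
import Mathlib

section
/- Let h be a Macaulay function with h(0) = 1 and h(1) = a > 1 which is not binomial (i.e. s_0(h) < ∞). Then there exist an integer r ≥ 1 and Macaulay functions h_0, …, h_r such that: (i) h_i(1) = a-1 for 0 ≤ i < r and h_r(1) ≤ a-1; (ii) for each 1 ≤ i ≤ r, either s_0(h_{i-1}) = ∞ or h_i has finite support with sup h_i < s_0(h_{i-1}) - 1; (iii) h = h_0 + h_1[-1] + ⋯ + h_r[-r]. Moreover s_0(h) = r + 1. -/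
open scoped BigOperators

/-- The largest `m` with `C(m, i) ≤ α` (for `i ≥ 1`, `α ≥ 1` this is the leading
exponent of the `i`-binomial development of `α`). -/
noncomputable def lead (α i : ℕ) : ℕ := sSup {m : ℕ | Nat.choose m i ≤ α}

/-- `binUp i α = α^{<i>}`, defined through the `i`-binomial development of `α`:
if `α = C(m_i, i) + C(m_{i-1}, i-1) + ⋯ + C(m_j, j)` with
`m_i > m_{i-1} > ⋯ > m_j ≥ j ≥ 1`, then
`binUp i α = C(m_i+1, i+1) + C(m_{i-1}+1, i) + ⋯ + C(m_j+1, j+1)`, and `binUp i 0 = 0`. -/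
noncomputable def binUp : ℕ → ℕ → ℕ
  | 0, _ => 0
  | (i+1), α =>
    if α = 0 then 0
    else Nat.choose (lead α (i+1) + 1) (i+2) +
      binUp i (α - Nat.choose (lead α (i+1)) (i+1))

/-- `h : ℕ → ℕ` is a Macaulay function if `h 0 = 1` and `h (i+1) ≤ (h i)^{<i>}`
for every `i ≥ 1`. -/
def MacaulayFun (h : ℕ → ℕ) : Prop :=
  h 0 = 1 ∧ ∀ i, 1 ≤ i → h (i+1) ≤ binUp i (h i)

/-- `s₀(h) = inf {n | h n < C(a+n-1, n)} ∈ ℕ ∪ {∞}` for a Macaulay function of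
type `a = h 1`. -/
noncomputable def s0M (h : ℕ → ℕ) : ℕ∞ :=
  sInf {x : ℕ∞ | ∃ n : ℕ, x = (n : ℕ∞) ∧ h n < Nat.choose (h 1 + n - 1) n}

/-- `sup f = max {n | f n ≠ 0}` for a finitely supported `f : ℕ → ℕ`. -/
noncomputable def supN (f : ℕ → ℕ) : ℕ := sSup {n : ℕ | f n ≠ 0}

/-- A character: a finitely supported `γ : ℤ → ℤ` with `∑ γ(n) = 0`. -/
def IsChar (γ : ℤ → ℤ) : Prop :=
  (Function.support γ).Finite ∧ ∑ᶠ n, γ n = 0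

/-- `s₀(γ) = inf {n ≥ 0 | γ n ≠ -1}`. -/
noncomputable def s0C (γ : ℤ → ℤ) : ℤ := sInf {n : ℤ | 0 ≤ n ∧ γ n ≠ -1}

/-- A positive character: `γ(n) = 0` for `n < 0`, `γ(0) = -1` and `γ(n) ≥ 0`
for every `n ≥ s₀(γ)`. -/
def PosChar (γ : ℤ → ℤ) : Prop :=
  IsChar γ ∧ (∀ n < 0, γ n = 0) ∧ γ 0 = -1 ∧ ∀ n : ℤ, s0C γ ≤ n → 0 ≤ γ n

/-- `sup γ = max {n | γ n ≠ 0}` for a finitely supported `γ : ℤ → ℤ`. -/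
noncomputable def supZ (γ : ℤ → ℤ) : ℤ := sSup {n : ℤ | γ n ≠ 0}

/-- `IsDev α i j m` says that `α = C(m_i, i) + C(m_{i-1}, i-1) + ⋯ + C(m_j, j)`
with `m_i > m_{i-1} > ⋯ > m_j ≥ j ≥ 1` is the `i`-binomial development of `α`. -/
def IsDev (α i j : ℕ) (m : ℕ → ℕ) : Prop :=
  1 ≤ j ∧ j ≤ i ∧ j ≤ m j ∧ (∀ k, j ≤ k → k < i → m k < m (k+1)) ∧
    α = ∑ k ∈ Finset.Icc j i, Nat.choose (m k) k

/-!
Write `a = c + 2` and let `B(n) = C(c+n, n)` be the binomial function of type `a - 1`.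
Starting from `G₀ = h`, split off `hᵢ = min(Gᵢ, B)` and pass to the excess
`G_{i+1}(n) = Gᵢ(n+1) - B(n+1)`, so that `Gᵢ = hᵢ + G_{i+1}[-1]`. The identity
`(C(m, n+1) + y)^{<n+1>} = C(m+1, n+2) + y^{<n>}` for `y ≤ C(m, n)` shows that each excess
again satisfies Macaulay's growth condition and has type at most `a`.
Since `h` is binomial of type `a` below `s = s₀(h)`, the `Gᵢ` with `i < s - 1` have type `a`
while `G_{s-1}` has type `< a`, which forces `G_s = 0`. Once `G_{i-1}` falls below `B` at
`n₀ = s₀(h_{i-1})` it stays `≤ B`, so `G_i`, and with it `h_i`, vanishes from `n₀ - 1` on.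
-/

open Finset

lemma add_one_le_choose_add (m : ℕ) {i : ℕ} (hi : 1 ≤ i) : m + 1 ≤ (m + i).choose i := by
  induction m with
  | zero => simp
  | succ m ih =>
    obtain ⟨j, rfl⟩ : ∃ j, i = j + 1 := ⟨i - 1, by omega⟩
    rw [show m + 1 + (j + 1) = m + (j + 1) + 1 by omega, Nat.choose_succ_succ']
    have : 0 < (m + (j + 1)).choose j := Nat.choose_pos (by omega)
    omega

section lead

variable {α β i m : ℕ}

lemma bddAbove_choose_le (hi : 1 ≤ i) : BddAbove {m : ℕ | m.choose i ≤ α} := by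
  refine ⟨α + i, fun m hm => ?_⟩
  by_contra! hlt
  have := (add_one_le_choose_add (α + 1) hi).trans
    (Nat.choose_le_choose i (by omega : α + 1 + i ≤ m))
  have hm' : m.choose i ≤ α := hm
  omega

lemma choose_lead_le (hi : 1 ≤ i) : (lead α i).choose i ≤ α :=
  Nat.sSup_mem ⟨0, by simp [Nat.choose_eq_zero_of_lt hi]⟩ (bddAbove_choose_le hi)

lemma le_lead (hi : 1 ≤ i) (h : m.choose i ≤ α) : m ≤ lead α i :=
  le_csSup (bddAbove_choose_le hi) h

lemma lead_lt (hi : 1 ≤ i) (h : α < m.choose i) : lead α i < m := by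
  by_contra! hle
  have := (Nat.choose_le_choose i hle).trans (choose_lead_le (α := α) hi)
  omega

lemma lt_choose_lead_add_one (hi : 1 ≤ i) : α < (lead α i + 1).choose i := by
  by_contra! hle
  have := le_lead hi hle
  omega

lemma lead_eq_of_le_of_lt (hi : 1 ≤ i) (h₁ : m.choose i ≤ α) (h₂ : α < (m + 1).choose i) :
    lead α i = m :=
  le_antisymm (Nat.lt_succ_iff.mp (lead_lt hi h₂)) (le_lead hi h₁)

lemma lead_mono (hi : 1 ≤ i) (hαβ : α ≤ β) : lead α i ≤ lead β i :=
  le_lead hi ((choose_lead_le hi).trans hαβ)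

lemma lead_choose (hi : 1 ≤ i) (hm : i ≤ m) : lead (m.choose i) i = m := by
  obtain ⟨j, rfl⟩ : ∃ j, i = j + 1 := ⟨i - 1, by omega⟩
  refine lead_eq_of_le_of_lt hi le_rfl ?_
  rw [Nat.choose_succ_succ']
  have : 0 < m.choose j := Nat.choose_pos (by omega)
  omega

end lead

section binUp

variable {α i m n y : ℕ}

@[simp]
lemma binUp_zero_right (i : ℕ) : binUp i 0 = 0 := by
  cases i <;> simp [binUp]

lemma binUp_succ_of_ne_zero (i : ℕ) (hα : α ≠ 0) :
    binUp (i + 1) α =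
      (lead α (i + 1) + 1).choose (i + 2) + binUp i (α - (lead α (i + 1)).choose (i + 1)) := by
  rw [binUp, if_neg hα]

lemma binUp_choose (hn : 1 ≤ n) (hm : n ≤ m) :
    binUp n (m.choose n) = (m + 1).choose (n + 1) := by
  obtain ⟨i, rfl⟩ : ∃ i, n = i + 1 := ⟨n - 1, by omega⟩
  rw [binUp_succ_of_ne_zero i (Nat.choose_pos hm).ne', lead_choose hn hm, Nat.sub_self,
    binUp_zero_right, add_zero]

lemma binUp_lt_choose_add_one (h : α < m.choose i) : binUp i α < (m + 1).choose (i + 1) := by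
  induction i generalizing α m with
  | zero => simp [binUp]
  | succ i ih =>
    rcases Nat.eq_zero_or_pos α with rfl | hα
    · have hm : i + 1 ≤ m := by
        by_contra! hm
        rw [Nat.choose_eq_zero_of_lt hm] at h
        omega
      simpa using Nat.choose_pos (by omega : i + 2 ≤ m + 1)
    · have hl : lead α (i + 1) < m := lead_lt (by omega) h
      have hlow : (lead α (i + 1)).choose (i + 1) ≤ α := choose_lead_le (by omega)
      have hup : α < (lead α (i + 1) + 1).choose (i + 1) := lt_choose_lead_add_one (by omega)
      rw [binUp_succ_of_ne_zero i hα.ne']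
      generalize lead α (i + 1) = l at *
      rw [Nat.choose_succ_succ'] at hup
      have hrest := ih (α := α - l.choose (i + 1)) (m := l) (by omega)
      have hpascal : (l + 2).choose (i + 2) = (l + 1).choose (i + 1) + (l + 1).choose (i + 2) :=
        Nat.choose_succ_succ' (l + 1) (i + 1)
      have hmono := Nat.choose_le_choose (i + 2) (by omega : l + 2 ≤ m + 1)
      show _ < (m + 1).choose (i + 2)
      omega

lemma binUp_mono (i : ℕ) : Monotone (binUp i) := by
  induction i with
  | zero => intro _ _ _; simp [binUp]
  | succ i ih =>
    intro α β hαβ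
    rcases Nat.eq_zero_or_pos α with rfl | hα
    · simp
    have hlead : lead α (i + 1) ≤ lead β (i + 1) := lead_mono (by omega) hαβ
    rcases hlead.eq_or_lt with heq | hlt
    · rw [binUp_succ_of_ne_zero i hα.ne', binUp_succ_of_ne_zero i (by omega), heq]
      exact Nat.add_le_add_left (ih (by omega)) _
    · apply le_of_lt
      calc binUp (i + 1) α < (lead α (i + 1) + 1 + 1).choose (i + 1 + 1) :=
            binUp_lt_choose_add_one (lt_choose_lead_add_one (by omega))
        _ ≤ (lead β (i + 1) + 1).choose (i + 2) := Nat.choose_le_choose _ (by omega)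
        _ ≤ binUp (i + 1) β := by
            rw [binUp_succ_of_ne_zero i (by omega)]
            exact Nat.le_add_right _ _

/-- The leading term of `C(m, n+1) + y` is `C(m, n+1)`, except for `y = C(m, n)`, where the sum
is `C(m+1, n+1)`; both cases give the same value. -/
lemma binUp_choose_add (hn : 1 ≤ n) (hm : n < m) (hy : y ≤ m.choose n) :
    binUp (n + 1) (m.choose (n + 1) + y) = (m + 1).choose (n + 2) + binUp n y := by
  have hpascal := Nat.choose_succ_succ' m n
  rcases hy.eq_or_lt with rfl | hy
  · rw [Nat.add_comm (m.choose (n + 1)), ← hpascal, binUp_choose (by omega) (by omega),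
      binUp_choose hn hm.le, Nat.choose_succ_succ' (m + 1) (n + 1), add_comm]
  · have hpos : 0 < m.choose (n + 1) := Nat.choose_pos hm
    rw [binUp_succ_of_ne_zero n (by omega),
      lead_eq_of_le_of_lt (by omega) (Nat.le_add_right _ _) (by omega), Nat.add_sub_cancel_left]

end binUp

def MacaulayGrowth (g : ℕ → ℕ) : Prop :=
  ∀ n, 1 ≤ n → g (n + 1) ≤ binUp n (g n)

lemma macaulayGrowth_choose (c : ℕ) : MacaulayGrowth fun n => (c + n).choose n :=
  fun n hn => (binUp_choose (m := c + n) hn (by omega)).ge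

namespace MacaulayGrowth

variable {f g : ℕ → ℕ} {c : ℕ}

lemma min (hf : MacaulayGrowth f) (hg : MacaulayGrowth g) :
    MacaulayGrowth fun n => min (f n) (g n) :=
  fun n hn => (min_le_min (hf n hn) (hg n hn)).trans_eq (binUp_mono n).map_min.symm

lemma le_choose_of_le (hg : MacaulayGrowth g) {n₀ m : ℕ} (hn₀ : 1 ≤ n₀)
    (h : g n₀ ≤ (c + n₀).choose n₀) (hm : n₀ ≤ m) : g m ≤ (c + m).choose m := by
  induction m, hm using Nat.le_induction with
  | base => exact h
  | succ m hm ih =>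
    exact (hg m (by omega)).trans
      ((binUp_mono m ih).trans_eq (binUp_choose (by omega) (by omega)))

lemma le_choose (hg : MacaulayGrowth g) (h1 : g 1 ≤ c + 1) {n : ℕ} (hn : 1 ≤ n) :
    g n ≤ (c + n).choose n :=
  hg.le_choose_of_le le_rfl (by rwa [Nat.choose_one_right]) hn

end MacaulayGrowth

def binomExcess (c : ℕ) (g : ℕ → ℕ) (n : ℕ) : ℕ :=
  g (n + 1) - (c + (n + 1)).choose (n + 1)

def binomCap (c : ℕ) (g : ℕ → ℕ) (n : ℕ) : ℕ :=
  min (g n) ((c + n).choose n)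

section binomExcess

variable {g : ℕ → ℕ} {c n : ℕ}

lemma binomCap_add_binomExcess (h0 : g 0 ≤ 1) (n : ℕ) :
    g n = binomCap c g n + if 1 ≤ n then binomExcess c g (n - 1) else 0 := by
  cases n with
  | zero =>
    rw [binomCap, if_neg (by omega), Nat.choose_zero_right]
    omega
  | succ n =>
    rw [binomCap, if_pos (by omega), Nat.add_sub_cancel, binomExcess]
    omega

lemma macaulayGrowth_binomExcess (hg : MacaulayGrowth g) (h1 : g 1 ≤ c + 2) :
    MacaulayGrowth (binomExcess c g) := by
  intro n hn
  have hgrow : g (n + 2) ≤ binUp (n + 1) (g (n + 1)) := hg (n + 1) (by omega)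
  show g (n + 2) - (c + n + 2).choose (n + 2) ≤ binUp n (g (n + 1) - (c + n + 1).choose (n + 1))
  rcases le_or_gt (g (n + 1)) ((c + n + 1).choose (n + 1)) with hle | hgt
  · have := (binUp_mono (n + 1) hle).trans_eq (binUp_choose (by omega) (by omega))
    rw [Nat.sub_eq_zero_of_le (hgrow.trans this)]
    exact Nat.zero_le _
  · obtain ⟨y, hy⟩ : ∃ y, g (n + 1) = (c + n + 1).choose (n + 1) + y :=
      ⟨_, (Nat.add_sub_of_le hgt.le).symm⟩
    have hbound : g (n + 1) ≤ (c + 1 + (n + 1)).choose (n + 1) := hg.le_choose h1 (by omega)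
    have hpascal : (c + 1 + (n + 1)).choose (n + 1) =
        (c + n + 1).choose n + (c + n + 1).choose (n + 1) := by
      rw [show c + 1 + (n + 1) = c + n + 1 + 1 by ring]
      exact Nat.choose_succ_succ' _ _
    rw [hy, binUp_choose_add hn (by omega) (by omega)] at hgrow
    rw [hy, Nat.add_sub_cancel_left, tsub_le_iff_left]
    exact hgrow

lemma binomExcess_one_le (hg : MacaulayGrowth g) (h1 : g 1 ≤ c + 2) :
    binomExcess c g 1 ≤ c + 2 := by
  have h2 : g 2 ≤ (c + 3).choose 2 :=
    (hg 1 le_rfl).trans ((binUp_mono 1 (by rwa [Nat.choose_one_right])).trans_eq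
      (binUp_choose le_rfl (by omega) : binUp 1 ((c + 2).choose 1) = _))
  have hpascal : (c + 3).choose 2 = (c + 2).choose 1 + (c + 2).choose 2 :=
    Nat.choose_succ_succ' _ _
  rw [Nat.choose_one_right] at hpascal
  show g 2 - (c + 2).choose 2 ≤ c + 2
  omega

lemma macaulayGrowth_iterate_binomExcess (hg : MacaulayGrowth g) (h1 : g 1 ≤ c + 2) (i : ℕ) :
    MacaulayGrowth ((binomExcess c)^[i] g) ∧ (binomExcess c)^[i] g 1 ≤ c + 2 := by
  induction i with
  | zero => exact ⟨hg, h1⟩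
  | succ i ih =>
    rw [Function.iterate_succ']
    exact ⟨macaulayGrowth_binomExcess ih.1 ih.2, binomExcess_one_le ih.1 ih.2⟩

lemma binomExcess_eq_zero (hg : MacaulayGrowth g) {n₀ : ℕ} (hn₀ : 1 ≤ n₀)
    (h : g n₀ ≤ (c + n₀).choose n₀) (hn : n₀ ≤ n + 1) : binomExcess c g n = 0 :=
  Nat.sub_eq_zero_of_le (hg.le_choose_of_le hn₀ h hn)

lemma binomExcess_eq_choose (h : g (n + 1) = (c + 1 + (n + 1)).choose (n + 1)) :
    binomExcess c g n = (c + 1 + n).choose n := by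
  rw [binomExcess, h, show c + 1 + (n + 1) = c + (n + 1) + 1 by ring, Nat.choose_succ_succ',
    Nat.add_sub_cancel, show c + (n + 1) = c + 1 + n by ring]

lemma binomExcess_lt_choose (h : g (n + 1) < (c + 1 + (n + 1)).choose (n + 1)) :
    binomExcess c g n < (c + 1 + n).choose n := by
  rw [show c + 1 + (n + 1) = c + (n + 1) + 1 by ring, Nat.choose_succ_succ'] at h
  rw [binomExcess, show c + 1 + n = c + (n + 1) by ring]
  have := Nat.choose_pos (by omega : n ≤ c + (n + 1))
  omega

lemma iterate_binomExcess_eq_choose {i k : ℕ} (h : ∀ n < i + k, g n = (c + 1 + n).choose n)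
    (hn : n < k) : (binomExcess c)^[i] g n = (c + 1 + n).choose n := by
  induction i generalizing k n with
  | zero => exact h n (by omega)
  | succ i ih =>
    rw [Function.iterate_succ_apply']
    exact binomExcess_eq_choose (ih (k := k + 1) (fun m hm => h m (by omega)) (by omega))

lemma iterate_binomExcess_lt_choose {i k : ℕ}
    (h : g (i + k) < (c + 1 + (i + k)).choose (i + k)) :
    (binomExcess c)^[i] g k < (c + 1 + k).choose k := by
  induction i generalizing k with
  | zero => simpa using h
  | succ i ih =>
    rw [Function.iterate_succ_apply']
    exact binomExcess_lt_choose (ih (k := k + 1) (by rwa [show i + (k + 1) = i + 1 + k by ring]))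

end binomExcess

section s0M

variable {h : ℕ → ℕ} {c s : ℕ}

lemma s0M_eq_coe_iff :
    s0M h = s ↔ h s < (h 1 + s - 1).choose s ∧ ∀ m < s, (h 1 + m - 1).choose m ≤ h m := by
  constructor
  · intro hs
    have hne : {x : ℕ∞ | ∃ n : ℕ, x = n ∧ h n < (h 1 + n - 1).choose n}.Nonempty := by
      by_contra hempty
      rw [Set.not_nonempty_iff_eq_empty] at hempty
      simp [s0M, hempty] at hs
    obtain ⟨n, hn, hlt⟩ := csInf_mem hne
    obtain rfl : s = n := by exact_mod_cast hs.symm.trans hn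
    refine ⟨hlt, fun m hm => not_lt.mp fun hm' => ?_⟩
    have : (s : ℕ∞) ≤ m := hs ▸ sInf_le ⟨m, rfl, hm'⟩
    exact hm.not_ge (by exact_mod_cast this)
  · rintro ⟨hlt, hmin⟩
    refine IsLeast.csInf_eq ⟨⟨s, rfl, hlt⟩, ?_⟩
    rintro _ ⟨n, rfl, hn⟩
    exact_mod_cast not_lt.mp fun hns => (hmin n hns).not_gt hn

lemma two_le_of_s0M_eq_coe (h0 : h 0 = 1) (hs : s0M h = s) : 2 ≤ s := by
  obtain ⟨hlt, -⟩ := s0M_eq_coe_iff.mp hs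
  by_contra! hs2
  interval_cases s <;> simp_all

lemma MacaulayFun.eq_choose_of_lt_s0M (hM : MacaulayFun h) (h1 : h 1 = c + 1) (hs : s0M h = s)
    {n : ℕ} (hn : n < s) : h n = (c + n).choose n := by
  rcases Nat.eq_zero_or_pos n with rfl | hn1
  · simpa using hM.1
  · refine le_antisymm (MacaulayGrowth.le_choose hM.2 h1.le hn1) ?_
    simpa [h1] using (s0M_eq_coe_iff.mp hs).2 n hn

end s0M

section binomCap

variable {g : ℕ → ℕ} {c : ℕ}

lemma macaulayFun_binomCap (hg : MacaulayGrowth g) (h0 : 1 ≤ g 0) :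
    MacaulayFun (binomCap c g) :=
  ⟨by simpa [binomCap] using h0, hg.min (macaulayGrowth_choose c)⟩

lemma binomCap_binomExcess_gap (hg : MacaulayGrowth g) (h0 : 1 ≤ g 0) (h1 : c + 1 ≤ g 1) :
    s0M (binomCap c g) = ⊤ ∨
      ((Function.support (binomCap c (binomExcess c g))).Finite ∧
        (supN (binomCap c (binomExcess c g)) : ℕ∞) + 1 < s0M (binomCap c g)) := by
  refine or_iff_not_imp_left.mpr fun hne => ?_
  obtain ⟨n₀, hn₀⟩ := ENat.ne_top_iff_exists.mp hne
  have hcap1 : binomCap c g 1 = c + 1 := by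
    rw [binomCap, Nat.choose_one_right]
    omega
  have hn₀2 : 2 ≤ n₀ := two_le_of_s0M_eq_coe (by simpa [binomCap] using h0) hn₀.symm
  have hlt := (s0M_eq_coe_iff.mp hn₀.symm).1
  rw [hcap1, show c + 1 + n₀ - 1 = c + n₀ by omega, binomCap] at hlt
  have hle : g n₀ ≤ (c + n₀).choose n₀ :=
    ((min_lt_iff.mp hlt).resolve_right (lt_irrefl _)).le
  have hvanish : ∀ m, n₀ - 1 ≤ m → binomCap c (binomExcess c g) m = 0 := fun m hm => by
    rw [binomCap, binomExcess_eq_zero hg (by omega) hle (by omega), Nat.zero_min]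
  refine ⟨(Set.finite_lt_nat (n₀ - 1)).subset fun m hm => ?_, ?_⟩
  · by_contra hm'
    exact hm (hvanish m (not_lt.mp hm'))
  · have hsup : supN (binomCap c (binomExcess c g)) ≤ n₀ - 2 :=
      csSup_le' fun m hm => by
        by_contra! hm'
        exact hm (hvanish m (by omega))
    rw [← hn₀]
    exact_mod_cast (by omega : supN (binomCap c (binomExcess c g)) + 1 < n₀)

end binomCap

lemma eq_sum_shift_of_eq_add_shift {G H : ℕ → ℕ → ℕ} {r : ℕ}
    (hG : ∀ i ≤ r, ∀ n, G i n = H i n + if 1 ≤ n then G (i + 1) (n - 1) else 0)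
    (hzero : ∀ n, G (r + 1) n = 0) (n : ℕ) :
    G 0 n = ∑ i ∈ range (r + 1), if i ≤ n then H i (n - i) else 0 := by
  have partial_sum : ∀ j ≤ r + 1,
      G 0 n = (∑ i ∈ range j, if i ≤ n then H i (n - i) else 0) +
        if j ≤ n then G j (n - j) else 0 := by
    intro j hj
    induction j with
    | zero => simp
    | succ j ih =>
      rw [ih (by omega), sum_range_succ, add_assoc, hG j (by omega) (n - j), Nat.sub_sub]
      split_ifs <;> omega
  simpa [hzero] using partial_sum (r + 1) le_rfl

/-- Theorem 2.20, existence: a non-binomial Macaulay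
function `h` of type `a > 1` decomposes as `h = h₀ + h₁[-1] + ⋯ + h_r[-r]`
with Macaulay functions `hᵢ` satisfying the type and gap conditions, and
`s₀(h) = r + 1`. -/
theorem macaulay_decomposition_exists (h : ℕ → ℕ) (a : ℕ) (ha : 1 < a)
    (hM : MacaulayFun h) (h1 : h 1 = a) (hnb : s0M h ≠ ⊤) :
    ∃ r : ℕ, 1 ≤ r ∧ ∃ H : ℕ → ℕ → ℕ,
      (∀ i ≤ r, MacaulayFun (H i)) ∧
      (∀ i < r, H i 1 = a - 1) ∧ H r 1 ≤ a - 1 ∧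
      (∀ i, 1 ≤ i → i ≤ r →
        s0M (H (i - 1)) = ⊤ ∨
          ((Function.support (H i)).Finite ∧
            (supN (H i) : ℕ∞) + 1 < s0M (H (i - 1)))) ∧
      (∀ n, h n = ∑ i ∈ Finset.range (r + 1),
        if i ≤ n then H i (n - i) else 0) ∧
      s0M h = (r : ℕ∞) + 1 := by
  obtain ⟨c, rfl⟩ : ∃ c, a = c + 2 := ⟨a - 2, by omega⟩
  obtain ⟨s, hs⟩ := ENat.ne_top_iff_exists.mp hnb
  have hs2 := two_le_of_s0M_eq_coe hM.1 hs.symm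
  obtain ⟨r, rfl⟩ : ∃ r, s = r + 1 := ⟨s - 1, by omega⟩
  have hbelow : ∀ n < r + 1, h n = (c + 1 + n).choose n := fun n =>
    hM.eq_choose_of_lt_s0M h1 hs.symm
  have hat : h (r + 1) < (c + 1 + (r + 1)).choose (r + 1) := by
    simpa [h1, show c + 2 + r = c + 1 + (r + 1) by ring] using (s0M_eq_coe_iff.mp hs.symm).1
  set G : ℕ → ℕ → ℕ := fun i => (binomExcess c)^[i] h
  have hgrowth (i : ℕ) := macaulayGrowth_iterate_binomExcess hM.2 h1.le i
  have hG0 : ∀ i ≤ r, G i 0 = 1 := fun i hi =>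
    iterate_binomExcess_eq_choose (k := 1) (fun n hn => hbelow n (by omega)) one_pos
  have hG1 : ∀ i < r, G i 1 = c + 2 := fun i hi =>
    (iterate_binomExcess_eq_choose (k := 2) (fun n hn => hbelow n (by omega)) one_lt_two).trans
      (Nat.choose_one_right _)
  have hGr : G r 1 ≤ (c + 1).choose 1 := by
    simpa [Nat.lt_succ_iff] using iterate_binomExcess_lt_choose (k := 1) hat
  have hnext : ∀ i, G (i + 1) = binomExcess c (G i) := fun i => Function.iterate_succ_apply' ..
  refine ⟨r, by omega, fun i => binomCap c (G i),
    fun i hi => macaulayFun_binomCap (hgrowth i).1 (hG0 i hi).ge,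
    fun i hi => by simp [binomCap, hG1 i hi], by simp [binomCap], fun i hi hir => ?_,
    eq_sum_shift_of_eq_add_shift (fun i hi => hnext i ▸ binomCap_add_binomExcess (hG0 i hi).le)
      (fun n => by rw [hnext, binomExcess_eq_zero (hgrowth r).1 le_rfl hGr (by omega)]),
    by rw [← hs]; push_cast; rfl⟩
  obtain ⟨j, rfl⟩ : ∃ j, i = j + 1 := ⟨i - 1, by omega⟩
  simp only [Nat.add_sub_cancel, hnext]
  exact binomCap_binomExcess_gap (hgrowth j).1 (hG0 j (by omega)).ge
    (by rw [hG1 j (by omega)]; omega)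
end

section
/- Let r ≥ 1 be an integer and let γ_0, …, γ_r be positive characters with sup γ_i < s_0(γ_{i-1}) for all 1 ≤ i ≤ r, and set γ = γ_0 + γ_1[-1] + ⋯ + γ_r[-r]. Then: (a) γ(n) ≥ -(r+1) for all n with r+1 ≤ n < s_0(γ_{r-1}) + r - 1; (b) for each 1 ≤ i ≤ r-1 and each n with s_0(γ_i) + i ≤ n < s_0(γ_{i-1}) + i - 1, one has γ(n) ≥ -i; (c) γ(n) ≥ 0 for all n ≥ s_0(γ_0). -/
open scoped BigOperators

/-! A positive character takes values `≥ -1` everywhere and `≥ 0` from `s₀` on, and since it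
sums to zero it must take a positive value, which forces `s₀ ≤ sup`. The gap condition
`sup γᵢ < s₀(γ_{i-1})` therefore makes `s₀(γᵢ) + i` weakly decreasing in `i`. Hence for
`n ≥ s₀(γᵢ) + i` every shifted term `γⱼ(n - j)` with `j ≥ i` is nonnegative, and only the `i`
terms with `j < i` can contribute, each at least `-1`. -/

open Finset

lemma eq_neg_one_of_lt_s0C {γ : ℤ → ℤ} {m : ℤ} (hm : 0 ≤ m) (hlt : m < s0C γ) :
    γ m = -1 := by
  by_contra hne
  exact (csInf_le ⟨0, fun _ hx => hx.1⟩ ⟨hm, hne⟩ : s0C γ ≤ m).not_gt hlt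

namespace PosChar

variable {γ : ℤ → ℤ}

lemma neg_one_le (h : PosChar γ) (m : ℤ) : -1 ≤ γ m := by
  rcases lt_or_ge m 0 with hm | hm
  · rw [h.2.1 m hm]; norm_num
  rcases lt_or_ge m (s0C γ) with hlt | hge
  · rw [eq_neg_one_of_lt_s0C hm hlt]
  · linarith [h.2.2.2 m hge]

lemma s0C_le_supZ (h : PosChar γ) : s0C γ ≤ supZ γ := by
  by_contra! hlt
  obtain ⟨⟨hfin, hsum⟩, hneg, hzero, -⟩ := h
  have hle_sup : ∀ n ∈ hfin.toFinset, n ≤ supZ γ := fun n hn =>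
    le_csSup hfin.bddAbove (hfin.mem_toFinset.mp hn)
  have hval : ∀ n ∈ hfin.toFinset, γ n < 0 := by
    intro n hn
    have hn0 : 0 ≤ n := by
      by_contra! hn0
      exact hfin.mem_toFinset.mp hn (hneg n hn0)
    rw [eq_neg_one_of_lt_s0C hn0 ((hle_sup n hn).trans_lt hlt)]
    norm_num
  have hne : hfin.toFinset.Nonempty := ⟨0, by simp [hzero]⟩
  have := sum_lt_sum_of_nonempty hne hval
  rw [← finsum_eq_sum γ hfin, hsum, sum_const_zero] at this
  exact this.false

end PosChar

section Decomposition

variable {r : ℕ} {Γ : ℕ → ℤ → ℤ}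

lemma s0C_add_le_of_le (hpos : ∀ i ≤ r, PosChar (Γ i))
    (hgap : ∀ i, 1 ≤ i → i ≤ r → supZ (Γ i) < s0C (Γ (i - 1)))
    {i j : ℕ} (hij : i ≤ j) (hjr : j ≤ r) : s0C (Γ j) + j ≤ s0C (Γ i) + i := by
  induction j, hij using Nat.le_induction with
  | base => rfl
  | succ k _ ih =>
    have hk := (hpos (k + 1) hjr).s0C_le_supZ.trans_lt (hgap (k + 1) (by omega) hjr)
    rw [Nat.add_sub_cancel] at hk
    have := ih (by omega)
    push_cast
    omega

lemma neg_succ_le_sum_shift (hpos : ∀ i ≤ r, PosChar (Γ i)) (n : ℤ) :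
    -((r : ℤ) + 1) ≤ ∑ j ∈ range (r + 1), Γ j (n - j) := by
  have := card_nsmul_le_sum (range (r + 1)) (fun j => Γ j (n - j)) (-1) fun j hj =>
    (hpos j (Nat.lt_succ_iff.mp (mem_range.mp hj))).neg_one_le _
  simpa using this

lemma neg_le_sum_shift (hpos : ∀ i ≤ r, PosChar (Γ i))
    (hgap : ∀ i, 1 ≤ i → i ≤ r → supZ (Γ i) < s0C (Γ (i - 1)))
    {i : ℕ} (hi : i ≤ r) {n : ℤ} (hn : s0C (Γ i) + i ≤ n) :
    -(i : ℤ) ≤ ∑ j ∈ range (r + 1), Γ j (n - j) := by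
  have hlow : -(i : ℤ) ≤ ∑ j ∈ range i, Γ j (n - j) := by
    have := card_nsmul_le_sum (range i) (fun j => Γ j (n - j)) (-1) fun j hj =>
      (hpos j (by have := mem_range.mp hj; omega)).neg_one_le _
    simpa using this
  have hhigh : 0 ≤ ∑ j ∈ Ico i (r + 1), Γ j (n - j) := by
    refine sum_nonneg fun j hj => ?_
    obtain ⟨hij, hjr⟩ := mem_Ico.mp hj
    have := s0C_add_le_of_le hpos hgap hij (Nat.lt_succ_iff.mp hjr)
    exact (hpos j (by omega)).2.2.2 _ (by omega)
  rw [← sum_range_add_sum_Ico _ (by omega : i ≤ r + 1)]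
  linarith

end Decomposition

theorem decomposition_lower_bounds_general (r : ℕ) (Γ : ℕ → ℤ → ℤ)
    (hpos : ∀ i ≤ r, PosChar (Γ i))
    (hgap : ∀ i, 1 ≤ i → i ≤ r → supZ (Γ i) < s0C (Γ (i - 1)))
    (γ : ℤ → ℤ) (hγ : ∀ n : ℤ, γ n = ∑ i ∈ Finset.range (r + 1), Γ i (n - i)) :
    (∀ n : ℤ, (r : ℤ) + 1 ≤ n → n < s0C (Γ (r - 1)) + (r : ℤ) - 1 →
      -((r : ℤ) + 1) ≤ γ n) ∧
    (∀ i : ℕ, 1 ≤ i → i ≤ r - 1 → ∀ n : ℤ,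
      s0C (Γ i) + (i : ℤ) ≤ n → n < s0C (Γ (i - 1)) + (i : ℤ) - 1 →
      -(i : ℤ) ≤ γ n) ∧
    (∀ n : ℤ, s0C (Γ 0) ≤ n → 0 ≤ γ n) := by
  simp only [hγ]
  refine ⟨fun n _ _ => neg_succ_le_sum_shift hpos n,
    fun i _ hi n hn _ => neg_le_sum_shift hpos hgap (by omega) hn, fun n hn => ?_⟩
  simpa using neg_le_sum_shift hpos hgap (Nat.zero_le r) (n := n) (by simpa using hn)

/-- Prop. 3.6: lower bounds for
`γ = γ₀ + γ₁[-1] + ⋯ + γ_r[-r]` built from positive characters with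
`sup γᵢ < s₀(γ_{i-1})`. -/
theorem decomposition_lower_bounds (r : ℕ) (hr : 1 ≤ r) (Γ : ℕ → ℤ → ℤ)
    (hpos : ∀ i ≤ r, PosChar (Γ i))
    (hgap : ∀ i, 1 ≤ i → i ≤ r → supZ (Γ i) < s0C (Γ (i - 1)))
    (γ : ℤ → ℤ) (hγ : ∀ n : ℤ, γ n = ∑ i ∈ Finset.range (r + 1), Γ i (n - i)) :
    (∀ n : ℤ, (r : ℤ) + 1 ≤ n → n < s0C (Γ (r - 1)) + (r : ℤ) - 1 →
      -((r : ℤ) + 1) ≤ γ n) ∧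
    (∀ i : ℕ, 1 ≤ i → i ≤ r - 1 → ∀ n : ℤ,
      s0C (Γ i) + (i : ℤ) ≤ n → n < s0C (Γ (i - 1)) + (i : ℤ) - 1 →
      -(i : ℤ) ≤ γ n) ∧
    (∀ n : ℤ, s0C (Γ 0) ≤ n → 0 ≤ γ n) :=
  decomposition_lower_bounds_general r Γ hpos hgap γ hγ
end
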